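/- In the two-community setup with stubborn nodes v_0, v_1 holding values 0 and 1, the average states y_h = (1/n_h)∑_{i∈U_h} x_i satisfy: y_0 ≤ (1 + n_0/n_1 + γ/β_0)^{-1}, 1 − y_1 ≤ (1 + n_1/n_0 + γ/β_1)^{-1}, and y_1 − y_0 ≤ (1 + β_0/γ + β_1/γ)^{-1}. -/

import Mathlib

/-!
Summing the harmonic equations `(L x)_i = 0` over a community, the edges inside the community
cancel by symmetry of `W`, the stubborn neighbour contributes `γ` per node, and the cross edges
contribute `β₀ S₀ - β₁ S₁`, where `S_h = ∑_{i ∈ U_h} x_i`. Counting the cross weight from both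
sides gives `β₀ n₀ = β₁ n₁`. The resulting 2 × 2 linear system has the solution
`y₀ = β₀ / (γ + β₀ + β₁)`, `y₁ = (γ + β₀) / (γ + β₀ + β₁)`, for which all three bounds are equalities.
-/

open Matrix Finset

section Laplacian

variable {V R : Type*} [CommRing R]

theorem laplacian_mulVec_apply [Fintype V] [DecidableEq V] (W : Matrix V V R) (x : V → R)
    (i : V) :
    (((diagonal fun i => ∑ j, W i j) - W) *ᵥ x) i = ∑ j, W i j * (x i - x j) := by
  rw [sub_mulVec, Pi.sub_apply, mulVec_diagonal]
  simp only [mulVec, dotProduct, mul_sub, sum_sub_distrib, sum_mul]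

theorem sum_sum_mul_sub_eq_zero_of_symm {W : Matrix V V R} {s : Finset V}
    (hW : ∀ i ∈ s, ∀ j ∈ s, W i j = W j i) (x : V → R) :
    ∑ i ∈ s, ∑ j ∈ s, W i j * (x i - x j) = 0 := by
  simp only [mul_sub, sum_sub_distrib]
  refine sub_eq_zero_of_eq ?_
  rw [sum_comm]
  exact sum_congr rfl fun j hj => sum_congr rfl fun i hi => by rw [hW i hi j hj]

theorem sum_sum_mul_sub_of_symm_of_rowSum {W : Matrix V V R} {s t : Finset V} {a b : R}
    (hW : ∀ i ∈ s, ∀ j ∈ t, W i j = W j i) (hs : ∀ i ∈ s, ∑ j ∈ t, W i j = a)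
    (ht : ∀ j ∈ t, ∑ i ∈ s, W j i = b) (x : V → R) :
    ∑ i ∈ s, ∑ j ∈ t, W i j * (x i - x j) = a * ∑ i ∈ s, x i - b * ∑ j ∈ t, x j := by
  simp only [mul_sub, sum_sub_distrib, ← sum_mul, mul_sum]
  rw [sum_comm]
  congr 1
  · exact sum_congr rfl fun i hi => by rw [hs i hi]
  · refine sum_congr rfl fun j hj => ?_
    rw [← ht j hj, sum_mul]
    exact sum_congr rfl fun i hi => by rw [hW i hi j hj]

theorem mul_card_eq_mul_card_of_symm_of_rowSum {W : Matrix V V R} {s t : Finset V} {a b : R}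
    (hW : ∀ i ∈ s, ∀ j ∈ t, W i j = W j i) (hs : ∀ i ∈ s, ∑ j ∈ t, W i j = a)
    (ht : ∀ j ∈ t, ∑ i ∈ s, W j i = b) :
    a * #s = b * #t := by
  have h := sum_sum_mul_sub_of_symm_of_rowSum hW hs ht 1
  simp only [Pi.one_apply, sub_self, mul_zero, sum_const_zero, sum_const, nsmul_eq_mul,
    mul_one] at h
  exact sub_eq_zero.mp h.symm

theorem sum_univ_eq_of_eq_insert_insert_union [Fintype V] [DecidableEq V] {M : Type*}
    [AddCommMonoid M] {a b : V} {s t : Finset V} (hab : a ≠ b)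
    (ha : a ∉ s ∪ t) (hb : b ∉ s ∪ t) (hst : Disjoint s t)
    (huniv : (univ : Finset V) = insert a (insert b (s ∪ t))) (f : V → M) :
    ∑ j, f j = f a + f b + (∑ j ∈ s, f j + ∑ j ∈ t, f j) := by
  have ha' : a ∉ insert b (s ∪ t) := by simp only [mem_insert, not_or]; exact ⟨hab, ha⟩
  rw [huniv, sum_insert ha', sum_insert hb, sum_union hst, add_assoc]

theorem sum_laplacian_mulVec_community [Fintype V] [DecidableEq V] {W : Matrix V V R}
    {a b : V} {s t : Finset V} {γ βs βt : R} (hab : a ≠ b)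
    (ha : a ∉ s ∪ t) (hb : b ∉ s ∪ t) (hst : Disjoint s t)
    (huniv : (univ : Finset V) = insert a (insert b (s ∪ t)))
    (hWa : ∀ i ∈ s, W i a = γ) (hWb : ∀ i ∈ s, W i b = 0)
    (hsym : ∀ i ∈ s ∪ t, ∀ j ∈ s ∪ t, W i j = W j i)
    (hs : ∀ i ∈ s, ∑ j ∈ t, W i j = βs) (ht : ∀ i ∈ t, ∑ j ∈ s, W i j = βt) (x : V → R) :
    ∑ i ∈ s, (((diagonal fun i => ∑ j, W i j) - W) *ᵥ x) i
      = γ * ∑ i ∈ s, (x i - x a) + (βs * ∑ i ∈ s, x i - βt * ∑ j ∈ t, x j) := by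
  have hsplit : ∀ i ∈ s, (((diagonal fun i => ∑ j, W i j) - W) *ᵥ x) i
      = γ * (x i - x a) + (∑ j ∈ s, W i j * (x i - x j) + ∑ j ∈ t, W i j * (x i - x j)) := by
    intro i hi
    rw [laplacian_mulVec_apply, sum_univ_eq_of_eq_insert_insert_union hab ha hb hst huniv,
      hWa i hi, hWb i hi, zero_mul, add_zero]
  rw [sum_congr rfl hsplit, sum_add_distrib, sum_add_distrib, ← mul_sum,
    sum_sum_mul_sub_eq_zero_of_symm (fun i hi j hj ↦ hsym i (mem_union_left t hi) j
      (mem_union_left t hj)),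
    sum_sum_mul_sub_of_symm_of_rowSum (fun i hi j hj ↦ hsym i (mem_union_left t hi) j
      (mem_union_right s hj)) hs ht, zero_add]

end Laplacian

theorem two_community_averages {n0 n1 γ β0 β1 S0 S1 : ℝ} (hn0 : n0 ≠ 0) (hn1 : n1 ≠ 0)
    (hγ : γ ≠ 0) (hsum : γ + β0 + β1 ≠ 0) (hbal : β0 * n0 = β1 * n1)
    (h0 : γ * S0 + (β0 * S0 - β1 * S1) = 0)
    (h1 : γ * (S1 - n1) + (β1 * S1 - β0 * S0) = 0) :
    n0⁻¹ * S0 = β0 / (γ + β0 + β1) ∧ n1⁻¹ * S1 = (γ + β0) / (γ + β0 + β1) := by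
  have hS01 : S0 + S1 = n1 := mul_left_cancel₀ hγ (by linear_combination h0 + h1)
  have hS0 : (γ + β0 + β1) * S0 = β1 * n1 := by linear_combination h0 + β1 * hS01
  constructor
  · rw [inv_mul_eq_div, div_eq_div_iff hn0 hsum]
    linear_combination hS0 - hbal
  · rw [inv_mul_eq_div, div_eq_div_iff hn1 hsum]
    linear_combination (γ + β0 + β1) * hS01 - hS0

theorem two_community_average_identities {n0 n1 γ β0 β1 : ℝ} (hn0 : 0 < n0) (hn1 : 0 < n1)
    (hγ : 0 < γ) (hβ0 : 0 < β0) (hβ1 : 0 < β1) (hbal : β0 * n0 = β1 * n1) :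
    β0 / (γ + β0 + β1) = (1 + n0 / n1 + γ / β0)⁻¹ ∧
    1 - (γ + β0) / (γ + β0 + β1) = (1 + n1 / n0 + γ / β1)⁻¹ ∧
    (γ + β0) / (γ + β0 + β1) - β0 / (γ + β0 + β1) = (1 + β0 / γ + β1 / γ)⁻¹ := by
  have hsum : γ + β0 + β1 ≠ 0 := by positivity
  have hcompl : 1 - (γ + β0) / (γ + β0 + β1) = β1 / (γ + β0 + β1) := by field_simp; ring
  rw [hcompl, ← sub_div, add_sub_cancel_right]
  refine ⟨?_, ?_, ?_⟩ <;> rw [eq_comm, inv_eq_iff_eq_inv, inv_div] <;> field_simp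
  · linear_combination hbal
  · linear_combination -hbal

theorem stmt_17_general {V : Type*} [Fintype V] [DecidableEq V]
    (v0 v1 : V) (U0 U1 : Finset V)
    (hv : v0 ≠ v1) (hv0 : v0 ∉ U0 ∪ U1) (hv1 : v1 ∉ U0 ∪ U1)
    (hU01 : Disjoint U0 U1) (hU0ne : U0.Nonempty) (hU1ne : U1.Nonempty)
    (hpart : (Finset.univ : Finset V) = insert v0 (insert v1 (U0 ∪ U1)))
    (γ β0 β1 : ℝ) (hγ : 0 < γ) (hβ0 : 0 < β0) (hβ1 : 0 < β1)
    (W : Matrix V V ℝ)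
    (hU0stub : ∀ i ∈ U0, W i v0 = γ ∧ W i v1 = 0)
    (hU1stub : ∀ i ∈ U1, W i v1 = γ ∧ W i v0 = 0)
    (hsym : ∀ i ∈ U0 ∪ U1, ∀ j ∈ U0 ∪ U1, W i j = W j i)
    (hβ0row : ∀ i ∈ U0, ∑ j ∈ U1, W i j = β0)
    (hβ1row : ∀ i ∈ U1, ∑ j ∈ U0, W i j = β1)
    (L : Matrix V V ℝ)
    (hL : L = Matrix.diagonal (fun i => ∑ j, W i j) - W)
    (x : V → ℝ)
    (hx0 : x v0 = 0) (hx1 : x v1 = 1)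
    (hxharm : ∀ i ∈ U0 ∪ U1, L.mulVec x i = 0)
    (y0 y1 : ℝ)
    (hy0 : y0 = (U0.card : ℝ)⁻¹ * ∑ i ∈ U0, x i)
    (hy1 : y1 = (U1.card : ℝ)⁻¹ * ∑ i ∈ U1, x i) :
    y0 ≤ (1 + (U0.card : ℝ) / (U1.card : ℝ) + γ / β0)⁻¹ ∧
    1 - y1 ≤ (1 + (U1.card : ℝ) / (U0.card : ℝ) + γ / β1)⁻¹ ∧
    y1 - y0 ≤ (1 + β0 / γ + β1 / γ)⁻¹ := by
  subst hL hy0 hy1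
  have hn0 : (0 : ℝ) < #U0 := by exact_mod_cast hU0ne.card_pos
  have hn1 : (0 : ℝ) < #U1 := by exact_mod_cast hU1ne.card_pos
  have hbal : β0 * #U0 = β1 * #U1 := mul_card_eq_mul_card_of_symm_of_rowSum
    (fun i hi j hj ↦ hsym i (mem_union_left U1 hi) j (mem_union_right U0 hj)) hβ0row hβ1row
  have hflux0 := sum_laplacian_mulVec_community hv hv0 hv1 hU01 hpart
    (fun i hi ↦ (hU0stub i hi).1) (fun i hi ↦ (hU0stub i hi).2) hsym hβ0row hβ1row x
  have hflux1 := sum_laplacian_mulVec_community hv.symm (union_comm U0 U1 ▸ hv1)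
    (union_comm U0 U1 ▸ hv0) hU01.symm (by rw [hpart, insert_comm, union_comm])
    (fun i hi ↦ (hU1stub i hi).1) (fun i hi ↦ (hU1stub i hi).2) (union_comm U0 U1 ▸ hsym)
    hβ1row hβ0row x
  rw [sum_eq_zero fun i hi ↦ hxharm i (mem_union_left U1 hi), hx0] at hflux0
  rw [sum_eq_zero fun i hi ↦ hxharm i (mem_union_right U0 hi), hx1] at hflux1
  simp only [sub_zero, sum_sub_distrib, sum_const, nsmul_eq_mul, mul_one] at hflux0 hflux1
  have hsum : γ + β0 + β1 ≠ 0 := by positivity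
  obtain ⟨hy0, hy1⟩ := two_community_averages hn0.ne' hn1.ne' hγ.ne' hsum hbal
    hflux0.symm hflux1.symm
  obtain ⟨e0, e1, e2⟩ := two_community_average_identities hn0 hn1 hγ hβ0 hβ1 hbal
  rw [hy0, hy1]
  exact ⟨e0.le, e1.le, e2.le⟩

/-- bounds on the average states `y_0, y_1` of the two communities in
the two-community setup with stubborn nodes `v_0` (value 0) and `v_1` (value 1). -/
theorem stmt_17 {V : Type*} [Fintype V] [DecidableEq V]
    (v0 v1 : V) (U0 U1 : Finset V)
    (hv : v0 ≠ v1) (hv0 : v0 ∉ U0 ∪ U1) (hv1 : v1 ∉ U0 ∪ U1)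
    (hU01 : Disjoint U0 U1) (hU0ne : U0.Nonempty) (hU1ne : U1.Nonempty)
    (hpart : (Finset.univ : Finset V) = insert v0 (insert v1 (U0 ∪ U1)))
    (γ β0 β1 : ℝ) (hγ : 0 < γ) (hβ0 : 0 < β0) (hβ1 : 0 < β1)
    (W : Matrix V V ℝ)
    (hWnn : ∀ i j, 0 ≤ W i j)
    (hv0row : W v0 v0 = γ ∧ ∀ j, j ≠ v0 → W v0 j = 0)
    (hv1row : W v1 v1 = γ ∧ ∀ j, j ≠ v1 → W v1 j = 0)
    (hU0stub : ∀ i ∈ U0, W i v0 = γ ∧ W i v1 = 0)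
    (hU1stub : ∀ i ∈ U1, W i v1 = γ ∧ W i v0 = 0)
    (hsym : ∀ i ∈ U0 ∪ U1, ∀ j ∈ U0 ∪ U1, W i j = W j i)
    (hirr : ∀ a ∈ U0 ∪ U1, ∀ b ∈ U0 ∪ U1, a ≠ b →
      Relation.TransGen (fun c d => c ∈ U0 ∪ U1 ∧ d ∈ U0 ∪ U1 ∧ 0 < W c d) a b)
    (hβ0row : ∀ i ∈ U0, ∑ j ∈ U1, W i j = β0)
    (hβ1row : ∀ i ∈ U1, ∑ j ∈ U0, W i j = β1)
    (L : Matrix V V ℝ)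
    (hL : L = Matrix.diagonal (fun i => ∑ j, W i j) - W)
    (x : V → ℝ)
    (hx0 : x v0 = 0) (hx1 : x v1 = 1)
    (hxharm : ∀ i ∈ U0 ∪ U1, L.mulVec x i = 0)
    (y0 y1 : ℝ)
    (hy0 : y0 = (U0.card : ℝ)⁻¹ * ∑ i ∈ U0, x i)
    (hy1 : y1 = (U1.card : ℝ)⁻¹ * ∑ i ∈ U1, x i) :
    y0 ≤ (1 + (U0.card : ℝ) / (U1.card : ℝ) + γ / β0)⁻¹ ∧
    1 - y1 ≤ (1 + (U1.card : ℝ) / (U0.card : ℝ) + γ / β1)⁻¹ ∧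
    y1 - y0 ≤ (1 + β0 / γ + β1 / γ)⁻¹ :=
  stmt_17_general v0 v1 U0 U1 hv hv0 hv1 hU01 hU0ne hU1ne hpart γ β0 β1 hγ hβ0 hβ1 W hU0stub hU1stub
    hsym hβ0row hβ1row L hL x hx0 hx1 hxharm y0 y1 hy0 hy1
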